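/- Let b, b' : ℝ^d → ℝ^d be C¹ and Σ, Σ' : ℝ^d → ℝ^{d×d} be C² with Σ(x), Σ'(x) symmetric positive definite for every x. Let p, p' : (0,∞) × ℝ^d → (0,∞) be C^{1,2} such that p(t,·) and p'(t,·) are probability densities for each t and, pointwise, ∂_t p = −∇·(b p) + (1/2) ∑_{i,j} ∂²_{x_i x_j}(Σ_{ij} p) and ∂_t p' = −∇·(b' p') + (1/2) ∑_{i,j} ∂²_{x_i x_j}(Σ'_{ij} p'). Define h_i = b_i − (1/2) ∑_j ∂_{x_j} Σ_{ij} (and h' likewise with b', Σ'), and Φ(t,x) = (1/2)(Σ'(x) − Σ(x)) ∇p'(t,x)/p'(t,x) − (h'(x) − h(x)). Fix t > 0 and assume: (i) s ↦ KL(p(s,·)‖p'(s,·)) is differentiable at t with derivative equal to ∫ ∂_t p(t,x) log(p(t,x)/p'(t,x)) dx − ∫ (p(t,x)/p'(t,x)) ∂_t p'(t,x) dx, and ∫ ∂_t p(t,x) dx = 0; (ii) the integrals ∫ p ‖Σ^{−1/2} Φ‖² dx and ∫ p' (p'/p) ‖Σ^{1/2} ∇(p/p')‖² dx at time t are finite;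 (iii) each of the following C¹ vector fields (at time t) is Lebesgue-integrable with integrable divergence whose integral over ℝ^d is zero: (−b p + (1/2)∇·(Σ p)) log(p/p'), Σ p ∇log(p/p'), (−b p' + (1/2)∇·(Σ p'))(p/p'), Σ p' ∇(p/p'), and Φ p' (p/p'). Then (d/ds) KL(p(s,·)‖p'(s,·)) at s = t is at most (1/2) ∫_{ℝ^d} p(t,x) ‖Σ(x)^{−1/2} Φ(t,x)‖² dx. -/

import Mathlib

noncomputable section

open MeasureTheory

open scoped ComplexOrder in
/-- The positive semidefinite square root of a positive semidefinite matrix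
(the definition removed from Mathlib, restored with its old meaning). -/
def Matrix.PosSemidef.sqrt {n : Type*} [Fintype n] [DecidableEq n] {𝕜 : Type*} [RCLike 𝕜]
    {A : Matrix n n 𝕜} (hA : A.PosSemidef) : Matrix n n 𝕜 :=
  hA.1.eigenvectorUnitary.1 * Matrix.diagonal ((↑) ∘ (√·) ∘ hA.1.eigenvalues) *
  (star hA.1.eigenvectorUnitary : Matrix n n 𝕜)

/-- `ℝ^d` with the Euclidean structure. -/
abbrev Euc (d : ℕ) := EuclideanSpace ℝ (Fin d)

/-- Partial derivative `∂_{x_i} f` of a scalar function on `ℝ^d`. -/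
def pd {d : ℕ} (i : Fin d) (f : Euc d → ℝ) (x : Euc d) : ℝ :=
  fderiv ℝ f x (EuclideanSpace.single i 1)

/-- Divergence `∇·G = ∑ i ∂_{x_i} G_i` of a vector field on `ℝ^d`. -/
def diverg {d : ℕ} (G : Euc d → Euc d) (x : Euc d) : ℝ :=
  ∑ i, pd i (fun y => G y i) x

/-- The Kullback–Leibler divergence `KL(p‖p') = ∫ p log(p/p')` (w.r.t. Lebesgue measure). -/
def KLdiv {d : ℕ} (p p' : Euc d → ℝ) : ℝ :=
  ∫ x, p x * Real.log (p x / p' x)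

/-- `h_i = b_i − (1/2) ∑_j ∂_{x_j} Σ_{ij}`. -/
def hVec {d : ℕ} (b : Euc d → Euc d) (S : Euc d → Matrix (Fin d) (Fin d) ℝ)
    (x : Euc d) : Euc d :=
  WithLp.toLp 2 fun i => b x i - (1 / 2) * ∑ j, pd j (fun y => S y i j) x

/-- `Φ = (1/2)(Σ' − Σ)∇q/q − (h' − h)`, for a (time-frozen) positive density `q`. -/
def PhiVec {d : ℕ} (b b' : Euc d → Euc d)
    (S S' : Euc d → Matrix (Fin d) (Fin d) ℝ) (q : Euc d → ℝ) (x : Euc d) : Euc d :=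
  WithLp.toLp 2 fun i =>
    (1 / 2) * (∑ j, (S' x i j - S x i j) * pd j q x) / q x
      - (hVec b' S' x i - hVec b S x i)

/-- The vector field `x ↦ −b q + (1/2)∇·(Σ q)`, i.e. with `i`-th component
`−b_i q + (1/2)∑_j ∂_{x_j}(Σ_{ij} q)`. -/
def Jvec {d : ℕ} (b : Euc d → Euc d) (S : Euc d → Matrix (Fin d) (Fin d) ℝ)
    (q : Euc d → ℝ) (x : Euc d) : Euc d :=
  WithLp.toLp 2 fun i => -(b x i * q x) + (1 / 2) * ∑ j, pd j (fun z => S z i j * q z) x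

/-- A C¹ vector field that is Lebesgue-integrable, with integrable divergence whose
integral over `ℝ^d` vanishes. -/
def GoodField {d : ℕ} (G : Euc d → Euc d) : Prop :=
  ContDiff ℝ 1 G ∧ Integrable G volume ∧ Integrable (diverg G) volume ∧
    (∫ x, diverg G x) = 0

/-!
Put `r = p / p'` and `J(b, Σ, q) = -b q + ½ ∇·(Σ q)`, so that the Fokker–Planck equations read
`∂ₜp = ∇·J(b, Σ, p)` and `∂ₜp' = ∇·J(b', Σ', p')`, where `J(b', Σ', p') = J(b, Σ, p') + p' Φ`.
By the product rule for the divergence, the integrand `∂ₜp log r - r ∂ₜp'` of the entropy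
derivative equals `p' ⟪∇r, Φ⟫ - ½ (p'² / p) ⟪∇r, Σ ∇r⟫` up to divergences of the vector fields
in (iii), whose integrals vanish. Writing `⟪∇r, Φ⟫ = ⟪Σ^{1/2} ∇r, Σ^{-1/2} Φ⟫`, Young's
inequality bounds this pointwise by `½ p ‖Σ^{-1/2} Φ‖²`, and the integrals in (ii) make every
term integrable.
-/

section SquareRoot

open scoped ComplexOrder

namespace Matrix

variable {n : Type*} [Fintype n] [DecidableEq n]

namespace PosSemidef

variable {𝕜 : Type*} [RCLike 𝕜] {A : Matrix n n 𝕜}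

theorem sqrt_mul_self (hA : A.PosSemidef) : hA.sqrt * hA.sqrt = A := by
  conv_rhs => rw [hA.1.spectral_theorem]
  have hU : (star hA.1.eigenvectorUnitary : Matrix n n 𝕜) * hA.1.eigenvectorUnitary.1 = 1 :=
    Unitary.coe_star_mul_self _
  simp only [sqrt, Unitary.conjStarAlgAut_apply, Matrix.mul_assoc]
  rw [← Matrix.mul_assoc _ hA.1.eigenvectorUnitary.1, hU, Matrix.one_mul,
    ← Matrix.mul_assoc (diagonal _), diagonal_mul_diagonal]
  congr 3
  funext i
  simp [← RCLike.ofReal_mul, Real.mul_self_sqrt (hA.eigenvalues_nonneg i)]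

theorem isHermitian_sqrt (hA : A.PosSemidef) : hA.sqrt.IsHermitian := by
  have hdiag : star (((↑) : ℝ → 𝕜) ∘ (√·) ∘ hA.1.eigenvalues) = (↑) ∘ (√·) ∘ hA.1.eigenvalues := by
    ext i; simp [RCLike.star_def]
  simp [IsHermitian, sqrt, conjTranspose_mul, Matrix.mul_assoc, star_eq_conjTranspose, hdiag]

end PosSemidef

theorem PosDef.isUnit_det_sqrt {𝕜 : Type*} [RCLike 𝕜] {A : Matrix n n 𝕜} (hA : A.PosDef) :
    IsUnit hA.posSemidef.sqrt.det := by
  refine isUnit_iff_ne_zero.2 fun h0 => hA.det_pos.ne' ?_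
  rw [← hA.posSemidef.sqrt_mul_self, det_mul, h0, zero_mul]

end Matrix

end SquareRoot

theorem abs_mul_real_inner_le {E : Type*} [NormedAddCommGroup E] [InnerProductSpace ℝ E]
    (a c : E) (Q : ℝ) {P : ℝ} (hP : 0 < P) :
    |Q * inner ℝ a c| ≤ (1 / 2) * (Q * (Q / P) * ‖a‖ ^ 2 + P * ‖c‖ ^ 2) := by
  have hcs : |Q * inner ℝ a c| ≤ |Q| * ‖a‖ * ‖c‖ := by
    rw [abs_mul, mul_assoc]
    exact mul_le_mul_of_nonneg_left (abs_real_inner_le_norm a c) (abs_nonneg Q)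
  have hyoung : 2 * (|Q| * ‖a‖) * ‖c‖ ≤ Q * (Q / P) * ‖a‖ ^ 2 + P * ‖c‖ ^ 2 := by
    have := sq_nonneg (|Q| * ‖a‖ - P * ‖c‖)
    rw [show Q * (Q / P) * ‖a‖ ^ 2 + P * ‖c‖ ^ 2 = ((|Q| * ‖a‖) ^ 2 + (P * ‖c‖) ^ 2) / P by
      field_simp; rw [sq_abs]; ring]
    rw [le_div_iff₀ hP]
    nlinarith
  linarith

-- With `r = P / P'` and `∇P = P' ∇r + r ∇P'`, the drift terms `h` cancel and the diffusion
-- terms combine into a quadratic form in `∇r`.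
theorem neg_inner_add_inner_eq {E : Type*} [NormedAddCommGroup E] [InnerProductSpace ℝ E]
    (A : E →ₗ[ℝ] E) (g gP' h : E) {P P' : ℝ} (hP : P ≠ 0) (hP' : P' ≠ 0) :
    -inner ℝ ((P / P')⁻¹ • g) ((1 / 2 : ℝ) • A (P' • g + (P / P') • gP') - P • h)
        + inner ℝ g ((1 / 2 : ℝ) • A gP' - P' • h)
      = -(1 / 2) * (P' * (P' / P)) * inner ℝ g (A g) := by
  simp only [map_add, map_smul, inner_add_right, inner_sub_right, real_inner_smul_left,
    real_inner_smul_right]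
  field_simp
  ring

namespace Matrix

variable {n : Type*} [Fintype n] [DecidableEq n] {A : Matrix n n ℝ}

theorem toEuclideanLin_apply_eq_sum (B : Matrix n n ℝ) (v : EuclideanSpace ℝ n) (i : n) :
    toEuclideanLin B v i = ∑ j, B i j * v j := by
  simp [mulVec, dotProduct]

theorem PosSemidef.inner_toEuclideanLin_self (hA : A.PosSemidef) (u : EuclideanSpace ℝ n) :
    inner ℝ u (toEuclideanLin A u) = ‖toEuclideanLin hA.sqrt u‖ ^ 2 := by
  rw [← real_inner_self_eq_norm_sq, isSymmetric_toEuclideanLin_iff.mpr hA.isHermitian_sqrt,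
    ← LinearMap.comp_apply, ← toLpLin_mul_same, hA.sqrt_mul_self]

theorem PosDef.inner_eq_inner_sqrt_sqrt_inv (hA : A.PosDef) (u w : EuclideanSpace ℝ n) :
    inner ℝ u w
      = inner ℝ (toEuclideanLin hA.posSemidef.sqrt u) (toEuclideanLin hA.posSemidef.sqrt⁻¹ w) := by
  rw [isSymmetric_toEuclideanLin_iff.mpr hA.posSemidef.isHermitian_sqrt,
    ← LinearMap.comp_apply, ← toLpLin_mul_same, mul_nonsing_inv _ hA.isUnit_det_sqrt,
    toLpLin_one, LinearMap.id_apply]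

theorem PosDef.mul_inner_sub_le (hA : A.PosDef) (u w : EuclideanSpace ℝ n) (P' : ℝ) {P : ℝ}
    (hP : 0 < P) :
    P' * inner ℝ u w - (1 / 2) * (P' * (P' / P)) * inner ℝ u (toEuclideanLin A u)
      ≤ (1 / 2) * (P * ‖toEuclideanLin hA.posSemidef.sqrt⁻¹ w‖ ^ 2) := by
  rw [hA.posSemidef.inner_toEuclideanLin_self, hA.inner_eq_inner_sqrt_sqrt_inv]
  have := (le_abs_self _).trans (abs_mul_real_inner_le (toEuclideanLin hA.posSemidef.sqrt u)
    (toEuclideanLin hA.posSemidef.sqrt⁻¹ w) P' hP)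
  linarith

theorem PosDef.integrable_mul_inner_sub {α : Type*} [MeasurableSpace α] {μ : Measure α}
    {A : α → Matrix n n ℝ} (hA : ∀ x, (A x).PosDef) {u w : α → EuclideanSpace ℝ n}
    {P P' : α → ℝ} (hu : AEStronglyMeasurable u μ) (hw : AEStronglyMeasurable w μ)
    (hP' : AEStronglyMeasurable P' μ) (hP : ∀ x, 0 < P x)
    (hw_int : Integrable (fun x => P x * ‖toEuclideanLin (hA x).posSemidef.sqrt⁻¹ (w x)‖ ^ 2) μ)
    (hu_int : Integrable
      (fun x => P' x * (P' x / P x) * ‖toEuclideanLin (hA x).posSemidef.sqrt (u x)‖ ^ 2) μ) :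
    Integrable (fun x => P' x * inner ℝ (u x) (w x)
      - (1 / 2) * (P' x * (P' x / P x)) * inner ℝ (u x) (toEuclideanLin (A x) (u x))) μ := by
  have hcross : Integrable (fun x => P' x * inner ℝ (u x) (w x)) μ := by
    refine ((hu_int.add hw_int).const_mul (1 / 2)).mono' (hP'.mul (hu.inner hw))
      (ae_of_all _ fun x => ?_)
    rw [Real.norm_eq_abs, (hA x).inner_eq_inner_sqrt_sqrt_inv]
    exact abs_mul_real_inner_le _ _ _ (hP x)
  refine hcross.sub ((hu_int.const_mul (1 / 2)).congr (ae_of_all _ fun x => ?_))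
  simp only [(hA x).posSemidef.inner_toEuclideanLin_self, mul_assoc]

end Matrix

-- Bochner integrals of non-integrable functions are `0`, which is why `0 ≤ B` is needed.
theorem integral_sub_integral_le_of_eq_add {α : Type*} [MeasurableSpace α] {μ : Measure α}
    {f g D K B : α → ℝ} (hfg : ∀ x, f x - g x = D x + K x) (hD : Integrable D μ)
    (hD0 : ∫ x, D x ∂μ = 0) (hK : Integrable K μ) (hB : Integrable B μ) (hKB : ∀ x, K x ≤ B x)
    (hB0 : ∀ x, 0 ≤ B x) : ∫ x, f x ∂μ - ∫ x, g x ∂μ ≤ ∫ x, B x ∂μ := by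
  have hfg_int : Integrable (fun x => f x - g x) μ :=
    (hD.add hK).congr (ae_of_all _ fun x => (hfg x).symm)
  by_cases hf : Integrable f μ
  · have hg : Integrable g μ :=
      (hf.sub hfg_int).congr (ae_of_all _ fun x => sub_sub_cancel (f x) (g x))
    rw [← integral_sub hf hg, integral_congr_ae (ae_of_all _ hfg), integral_add hD hK, hD0,
      zero_add]
    exact integral_mono hK hB hKB
  · have hg : ¬Integrable g μ := fun hg =>
      hf ((hfg_int.add hg).congr (ae_of_all _ fun x => sub_add_cancel (f x) (g x)))
    rw [integral_undef hf, integral_undef hg, sub_zero]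
    exact integral_nonneg hB0

section Gradient

variable {E : Type*} [NormedAddCommGroup E] [InnerProductSpace ℝ E] [CompleteSpace E]
  {f g : E → ℝ} {x : E}

theorem gradient_fun_mul (hf : DifferentiableAt ℝ f x) (hg : DifferentiableAt ℝ g x) :
    gradient (fun y => f y * g y) x = f x • gradient g x + g x • gradient f x := by
  refine ext_inner_right ℝ fun v => ?_
  simp [inner_add_left, real_inner_smul_left, inner_gradient_left, fderiv_fun_mul hf hg]

theorem gradient_log (hf : DifferentiableAt ℝ f x) (hfx : f x ≠ 0) :
    gradient (fun y => Real.log (f y)) x = (f x)⁻¹ • gradient f x := by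
  refine ext_inner_right ℝ fun v => ?_
  simp [real_inner_smul_left, inner_gradient_left, fderiv.log hf hfx]

theorem measurable_gradient [MeasurableSpace E] [BorelSpace E] : Measurable (gradient f) :=
  (InnerProductSpace.toDual ℝ E).symm.continuous.measurable.comp (measurable_fderiv ℝ f)

end Gradient

section Calculus

variable {d : ℕ} {f g φ : Euc d → ℝ} {F G : Euc d → Euc d} {x : Euc d} {i : Fin d}

theorem pd_mul (hf : DifferentiableAt ℝ f x) (hg : DifferentiableAt ℝ g x) :
    pd i (fun y => f y * g y) x = pd i f x * g x + f x * pd i g x := by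
  simp [pd, fderiv_fun_mul hf hg]
  ring

theorem contDiff_pd {m n : WithTop ℕ∞} (hf : ContDiff ℝ n f) (hmn : m + 1 ≤ n) :
    ContDiff ℝ m (pd i f) :=
  (hf.fderiv_right hmn).clm_apply contDiff_const

theorem measurable_pd : Measurable (pd i f) :=
  measurable_fderiv_apply_const ℝ f _

theorem gradient_apply_eq_pd : gradient f x i = pd i f x := by
  have h := inner_gradient_left (𝕜 := ℝ) (f := f) (x := x) (y := EuclideanSpace.single i 1)
  rw [EuclideanSpace.inner_single_right] at h
  simpa [pd] using h

theorem inner_gradient_eq_sum_pd (v : Euc d) : inner ℝ (gradient f x) v = ∑ i, pd i f x * v i := by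
  simp only [PiLp.inner_apply, gradient_apply_eq_pd, Real.inner_apply]

theorem pd_apply_eq_fderiv (hG : DifferentiableAt ℝ G x) (j : Fin d) :
    pd i (fun y => G y j) x = fderiv ℝ G x (EuclideanSpace.single i 1) j := by
  have h : (fun y => G y j) = EuclideanSpace.proj j ∘ G := rfl
  rw [pd, h, fderiv_comp x (EuclideanSpace.proj j).differentiableAt hG,
    ContinuousLinearMap.fderiv]
  rfl

theorem diverg_eq_sum_fderiv (hG : DifferentiableAt ℝ G x) :
    diverg G x = ∑ i, fderiv ℝ G x (EuclideanSpace.single i 1) i :=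
  Finset.sum_congr rfl fun i _ => pd_apply_eq_fderiv hG i

theorem diverg_add (hF : DifferentiableAt ℝ F x) (hG : DifferentiableAt ℝ G x) :
    diverg (fun y => F y + G y) x = diverg F x + diverg G x := by
  rw [diverg_eq_sum_fderiv (hF.fun_add hG), diverg_eq_sum_fderiv hF, diverg_eq_sum_fderiv hG,
    fderiv_fun_add hF hG, ← Finset.sum_add_distrib]
  rfl

theorem diverg_smul (hφ : DifferentiableAt ℝ φ x) (hG : DifferentiableAt ℝ G x) :
    diverg (fun y => φ y • G y) x = inner ℝ (gradient φ x) (G x) + φ x * diverg G x := by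
  rw [diverg_eq_sum_fderiv (hφ.fun_smul hG), diverg_eq_sum_fderiv hG, fderiv_fun_smul hφ hG,
    inner_gradient_eq_sum_pd, Finset.mul_sum, ← Finset.sum_add_distrib]
  simp [pd, add_comm]

end Calculus

section FokkerPlanck

variable {d : ℕ} {b b' : Euc d → Euc d} {S S' : Euc d → Matrix (Fin d) (Fin d) ℝ}
  {q P P' : Euc d → ℝ} {x : Euc d}

theorem Jvec_eq (hS : ∀ i j, DifferentiableAt ℝ (fun y => S y i j) x)
    (hq : DifferentiableAt ℝ q x) :
    Jvec b S q x = (1 / 2 : ℝ) • Matrix.toEuclideanLin (S x) (gradient q x) - q x • hVec b S x := by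
  ext i
  simp only [Jvec, hVec, pd_mul (hS _ _) hq, PiLp.sub_apply, PiLp.smul_apply, smul_eq_mul,
    Matrix.toEuclideanLin_apply_eq_sum, gradient_apply_eq_pd, Finset.sum_add_distrib,
    ← Finset.sum_mul]
  ring

theorem smul_PhiVec (hq : q x ≠ 0) :
    q x • PhiVec b b' S S' q x = (1 / 2 : ℝ) • Matrix.toEuclideanLin (S' x - S x) (gradient q x)
      - q x • (hVec b' S' x - hVec b S x) := by
  ext i
  simp only [PhiVec, PiLp.sub_apply, PiLp.smul_apply, smul_eq_mul,
    Matrix.toEuclideanLin_apply_eq_sum, gradient_apply_eq_pd, Matrix.sub_apply]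
  field_simp

theorem Jvec_sub_Jvec (hS : ∀ i j, DifferentiableAt ℝ (fun y => S y i j) x)
    (hS' : ∀ i j, DifferentiableAt ℝ (fun y => S' y i j) x) (hq : DifferentiableAt ℝ q x)
    (hqx : q x ≠ 0) :
    Jvec b' S' q x - Jvec b S q x = q x • PhiVec b b' S S' q x := by
  rw [Jvec_eq hS' hq, Jvec_eq hS hq, smul_PhiVec hqx, map_sub, LinearMap.sub_apply]
  module

theorem contDiff_Jvec {m n : WithTop ℕ∞} (hb : ContDiff ℝ m b)
    (hS : ∀ i j, ContDiff ℝ n fun y => S y i j) (hq : ContDiff ℝ n q) (hmn : m + 1 ≤ n) :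
    ContDiff ℝ m (Jvec b S q) := by
  have hqm : ContDiff ℝ m q := hq.of_le (le_self_add.trans hmn)
  refine (contDiff_piLp 2).2 fun i => ?_
  exact (((contDiff_piLp 2).1 hb i).mul hqm).neg.add
    (contDiff_const.mul (ContDiff.sum fun j _ => contDiff_pd ((hS i j).mul hq) hmn))

theorem diverg_Jvec (hb : ContDiff ℝ 1 b) (hS : ∀ i j, ContDiff ℝ 2 fun y => S y i j)
    (hq : ContDiff ℝ 2 q) :
    diverg (Jvec b S q) x = -diverg (fun y => q y • b y) x
      + (1 / 2) * ∑ i, ∑ j, pd i (fun y => pd j (fun z => S z i j * q z) y) x := by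
  simp only [diverg, Jvec]
  rw [Finset.mul_sum, ← Finset.sum_neg_distrib, ← Finset.sum_add_distrib]
  refine Finset.sum_congr rfl fun i _ => ?_
  have hbq : DifferentiableAt ℝ (fun y => b y i * q y) x :=
    (((contDiff_piLp 2).1 hb i).mul (hq.of_le one_le_two)).differentiable one_ne_zero x
  have hSq : ∀ j, DifferentiableAt ℝ (fun y => pd j (fun z => S z i j * q z) y) x := fun j =>
    (contDiff_pd ((hS i j).mul hq) (by norm_num : (1 : WithTop ℕ∞) + 1 ≤ 2)).differentiable
      one_ne_zero x
  have hderiv := hbq.hasFDerivAt.fun_neg.fun_add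
    ((HasFDerivAt.fun_sum (u := Finset.univ) fun j _ => (hSq j).hasFDerivAt).const_mul (1 / 2 : ℝ))
  rw [pd, hderiv.fderiv]
  simp [pd, Finset.mul_sum, mul_comm]

theorem measurable_hVec (hb : Measurable b) : Measurable (hVec b S) := by
  refine (WithLp.measurable_toLp 2 _).comp (measurable_pi_lambda _ fun i => ?_)
  exact ((measurable_pi_apply i).comp ((WithLp.measurable_ofLp 2 _).comp hb)).sub
    (measurable_const.mul (Finset.measurable_sum _ fun j _ => measurable_pd))

theorem measurable_PhiVec (hb : Measurable b) (hb' : Measurable b')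
    (hS : ∀ i j, Measurable fun y => S y i j) (hS' : ∀ i j, Measurable fun y => S' y i j)
    (hq : Measurable q) : Measurable (PhiVec b b' S S' q) := by
  refine (WithLp.measurable_toLp 2 _).comp (measurable_pi_lambda _ fun i => ?_)
  have hh := measurable_hVec (S := S) hb
  have hh' := measurable_hVec (S := S') hb'
  exact ((measurable_const.mul (Finset.measurable_sum _ fun j _ =>
      ((hS' i j).sub (hS i j)).mul measurable_pd)).div hq).sub
    (((measurable_pi_apply i).comp ((WithLp.measurable_ofLp 2 _).comp hh')).sub
      ((measurable_pi_apply i).comp ((WithLp.measurable_ofLp 2 _).comp hh)))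

theorem diverg_mul_log_sub_div_mul_diverg (hb : ContDiff ℝ 1 b) (hb' : ContDiff ℝ 1 b')
    (hS : ∀ i j, ContDiff ℝ 2 fun x => S x i j) (hS' : ∀ i j, ContDiff ℝ 2 fun x => S' x i j)
    (hP : ContDiff ℝ 2 P) (hP' : ContDiff ℝ 2 P') (hPpos : ∀ x, 0 < P x)
    (hP'pos : ∀ x, 0 < P' x) :
    diverg (Jvec b S P) x * Real.log (P x / P' x) - (P x / P' x) * diverg (Jvec b' S' P') x
      = diverg (fun y => Real.log (P y / P' y) • Jvec b S P y) x
          - diverg (fun y => (P y / P' y) • Jvec b S P' y) x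
          - diverg (fun y => (P' y * (P y / P' y)) • PhiVec b b' S S' P' y) x
        + (P' x * inner ℝ (gradient (fun y => P y / P' y) x) (PhiVec b b' S S' P' x)
          - (1 / 2) * (P' x * (P' x / P x)) * inner ℝ (gradient (fun y => P y / P' y) x)
              (Matrix.toEuclideanLin (S x) (gradient (fun y => P y / P' y) x))) := by
  set r := fun y => P y / P' y
  have hP'ne : ∀ y, P' y ≠ 0 := fun y => (hP'pos y).ne'
  have hPd : Differentiable ℝ P := hP.differentiable two_ne_zero
  have hP'd : Differentiable ℝ P' := hP'.differentiable two_ne_zero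
  have hrd : Differentiable ℝ r := (hP.div hP' hP'ne).differentiable two_ne_zero
  have hrpos : 0 < r x := div_pos (hPpos x) (hP'pos x)
  have hSd : ∀ y i j, DifferentiableAt ℝ (fun z => S z i j) y := fun y i j =>
    (hS i j).differentiable two_ne_zero y
  have hS'd : ∀ y i j, DifferentiableAt ℝ (fun z => S' z i j) y := fun y i j =>
    (hS' i j).differentiable two_ne_zero y
  have hJd : Differentiable ℝ (Jvec b S P) :=
    (contDiff_Jvec hb hS hP (by norm_num)).differentiable one_ne_zero
  have hJ₀d : Differentiable ℝ (Jvec b S P') :=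
    (contDiff_Jvec hb hS hP' (by norm_num)).differentiable one_ne_zero
  have hJ'd : Differentiable ℝ (Jvec b' S' P') :=
    (contDiff_Jvec hb' hS' hP' (by norm_num)).differentiable one_ne_zero
  have hΦ : (fun y => (P' y * r y) • PhiVec b b' S S' P' y)
      = fun y => r y • (Jvec b' S' P' y - Jvec b S P' y) := funext fun y => by
    rw [Jvec_sub_Jvec (hSd y) (hS'd y) (hP'd y) (hP'ne y), smul_smul, mul_comm]
  have hsplit : diverg (Jvec b' S' P') x
      = diverg (Jvec b S P') x + diverg (fun y => Jvec b' S' P' y - Jvec b S P' y) x := by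
    rw [← diverg_add (hJ₀d x) ((hJ'd x).fun_sub (hJ₀d x))]
    simp only [add_sub_cancel]
  have hgradP : gradient P x = P' x • gradient r x + r x • gradient P' x := by
    rw [show P = fun y => r y * P' y from funext fun y => (div_mul_cancel₀ _ (hP'ne y)).symm,
      gradient_fun_mul (hrd x) (hP'd x), add_comm]
  have hquad : -inner ℝ (gradient (fun y => Real.log (r y)) x) (Jvec b S P x)
        + inner ℝ (gradient r x) (Jvec b S P' x)
      = -(1 / 2) * (P' x * (P' x / P x))
          * inner ℝ (gradient r x) (Matrix.toEuclideanLin (S x) (gradient r x)) := by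
    rw [gradient_log (hrd x) hrpos.ne', Jvec_eq (hSd x) (hPd x), Jvec_eq (hSd x) (hP'd x), hgradP]
    exact neg_inner_add_inner_eq _ _ _ _ (hPpos x).ne' (hP'ne x)
  have hcross : inner ℝ (gradient r x) (Jvec b' S' P' x - Jvec b S P' x)
      = P' x * inner ℝ (gradient r x) (PhiVec b b' S S' P' x) := by
    rw [Jvec_sub_Jvec (hSd x) (hS'd x) (hP'd x) (hP'ne x), real_inner_smul_right]
  rw [hΦ, diverg_smul ((hrd x).log hrpos.ne') (hJd x), diverg_smul (hrd x) (hJ₀d x),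
    diverg_smul (hrd x) ((hJ'd x).fun_sub (hJ₀d x)), hsplit]
  linear_combination hquad + hcross

end FokkerPlanck

theorem GoodField.integrable_diverg {d : ℕ} {G : Euc d → Euc d} (hG : GoodField G) :
    Integrable (diverg G) volume :=
  hG.2.2.1

theorem GoodField.integral_diverg {d : ℕ} {G : Euc d → Euc d} (hG : GoodField G) :
    ∫ x, diverg G x = 0 :=
  hG.2.2.2

theorem GoodField.integral_diverg_sub_sub {d : ℕ} {F G H : Euc d → Euc d} (hF : GoodField F)
    (hG : GoodField G) (hH : GoodField H) : ∫ x, diverg F x - diverg G x - diverg H x = 0 := by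
  rw [integral_sub ?_ hH.integrable_diverg, integral_sub hF.integrable_diverg hG.integrable_diverg, hF.integral_diverg,
    hG.integral_diverg, hH.integral_diverg, sub_zero, sub_zero]
  exact hF.integrable_diverg.sub hG.integrable_diverg

theorem relative_entropy_derivative_bound_general {d : ℕ}
    (b b' : Euc d → Euc d) (hb : ContDiff ℝ 1 b) (hb' : ContDiff ℝ 1 b')
    (S S' : Euc d → Matrix (Fin d) (Fin d) ℝ)
    (hS : ∀ i j, ContDiff ℝ 2 fun x => S x i j)
    (hS' : ∀ i j, ContDiff ℝ 2 fun x => S' x i j)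
    (hSpos : ∀ x, (S x).PosDef)
    (p p' : ℝ → Euc d → ℝ)
    (hppos : ∀ t > (0:ℝ), ∀ x, 0 < p t x) (hp'pos : ∀ t > (0:ℝ), ∀ x, 0 < p' t x)
    (hpx : ∀ t > (0:ℝ), ContDiff ℝ 2 (p t)) (hp'x : ∀ t > (0:ℝ), ContDiff ℝ 2 (p' t))
    -- the two Fokker–Planck equations, pointwise
    (hFP : ∀ t > (0:ℝ), ∀ x, deriv (fun s => p s x) t =
      -(diverg (fun y => p t y • b y) x)
        + (1 / 2) * ∑ i, ∑ j, pd i (fun y => pd j (fun z => S z i j * p t z) y) x)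
    (hFP' : ∀ t > (0:ℝ), ∀ x, deriv (fun s => p' s x) t =
      -(diverg (fun y => p' t y • b' y) x)
        + (1 / 2) * ∑ i, ∑ j, pd i (fun y => pd j (fun z => S' z i j * p' t z) y) x)
    (t : ℝ) (ht : 0 < t)
    -- (i) differentiability of the relative entropy at `t`, with the stated derivative,
    -- and `∫ ∂_t p = 0`
    (hKderiv : HasDerivAt (fun s => KLdiv (p s) (p' s))
      ((∫ x, deriv (fun s => p s x) t * Real.log (p t x / p' t x))
        - ∫ x, (p t x / p' t x) * deriv (fun s => p' s x) t) t)
    -- (ii) finiteness of the two key integrals at time `t`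
    (hint1 : Integrable (fun x =>
      p t x * ‖Matrix.toEuclideanLin ((hSpos x).posSemidef.sqrt)⁻¹
        (PhiVec b b' S S' (p' t) x)‖ ^ 2) volume)
    (hint2 : Integrable (fun x =>
      p' t x * (p' t x / p t x) * ‖Matrix.toEuclideanLin (hSpos x).posSemidef.sqrt
        (gradient (fun y => p t y / p' t y) x)‖ ^ 2) volume)
    -- (iii) vanishing boundary terms
    (hG1 : GoodField fun x => Real.log (p t x / p' t x) • Jvec b S (p t) x)
    (hG3 : GoodField fun x => (p t x / p' t x) • Jvec b S (p' t) x)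
    (hG5 : GoodField fun x =>
      (p' t x * (p t x / p' t x)) • PhiVec b b' S S' (p' t) x) :
    deriv (fun s => KLdiv (p s) (p' s)) t ≤
      (1 / 2) * ∫ x, p t x * ‖Matrix.toEuclideanLin ((hSpos x).posSemidef.sqrt)⁻¹
        (PhiVec b b' S S' (p' t) x)‖ ^ 2 := by
  have hP := hpx t ht
  have hP' := hp'x t ht
  have hpos := hppos t ht
  set Φ := PhiVec b b' S S' (p' t)
  set ρ := gradient fun y => p t y / p' t y
  set D := fun x => diverg (fun y => Real.log (p t y / p' t y) • Jvec b S (p t) y) x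
    - diverg (fun y => (p t y / p' t y) • Jvec b S (p' t) y) x
    - diverg (fun y => (p' t y * (p t y / p' t y)) • Φ y) x
  set K := fun x => p' t x * inner ℝ (ρ x) (Φ x)
    - (1 / 2) * (p' t x * (p' t x / p t x)) * inner ℝ (ρ x) (Matrix.toEuclideanLin (S x) (ρ x))
  have hDK : ∀ x, deriv (fun s => p s x) t * Real.log (p t x / p' t x)
      - (p t x / p' t x) * deriv (fun s => p' s x) t = D x + K x := fun x => by
    rw [hFP t ht x, hFP' t ht x, ← diverg_Jvec hb hS hP, ← diverg_Jvec hb' hS' hP']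
    exact diverg_mul_log_sub_div_mul_diverg hb hb' hS hS' hP hP' hpos (hp'pos t ht)
  have hD : Integrable D volume :=
    (hG1.integrable_diverg.sub hG3.integrable_diverg).sub hG5.integrable_diverg
  have hD0 : ∫ x, D x = 0 := hG1.integral_diverg_sub_sub hG3 hG5
  have hΦ : Measurable Φ := measurable_PhiVec hb.continuous.measurable hb'.continuous.measurable
    (fun i j => (hS i j).continuous.measurable) (fun i j => (hS' i j).continuous.measurable)
    hP'.continuous.measurable
  have hK : Integrable K volume := Matrix.PosDef.integrable_mul_inner_sub hSpos
    measurable_gradient.aestronglyMeasurable hΦ.aestronglyMeasurable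
    hP'.continuous.aestronglyMeasurable hpos hint1 hint2
  rw [hKderiv.deriv, ← integral_const_mul]
  exact integral_sub_integral_le_of_eq_add hDK hD hD0 hK (hint1.const_mul _)
    (fun x => (hSpos x).mul_inner_sub_le _ _ _ (hpos x))
    (fun x => mul_nonneg (by norm_num) (mul_nonneg (hpos x).le (sq_nonneg _)))

/-- Main theorem: derivative of the relative entropy between two Fokker–Planck flows is
bounded by `(1/2)∫ p ‖Σ^{-1/2} Φ‖²`. -/
theorem relative_entropy_derivative_bound {d : ℕ}
    (b b' : Euc d → Euc d) (hb : ContDiff ℝ 1 b) (hb' : ContDiff ℝ 1 b')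
    (S S' : Euc d → Matrix (Fin d) (Fin d) ℝ)
    (hS : ∀ i j, ContDiff ℝ 2 fun x => S x i j)
    (hS' : ∀ i j, ContDiff ℝ 2 fun x => S' x i j)
    (hSpos : ∀ x, (S x).PosDef) (hS'pos : ∀ x, (S' x).PosDef)
    (p p' : ℝ → Euc d → ℝ)
    (hppos : ∀ t > (0:ℝ), ∀ x, 0 < p t x) (hp'pos : ∀ t > (0:ℝ), ∀ x, 0 < p' t x)
    (hpdens : ∀ t > (0:ℝ), ∫ x, p t x = 1) (hp'dens : ∀ t > (0:ℝ), ∫ x, p' t x = 1)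
    (hpx : ∀ t > (0:ℝ), ContDiff ℝ 2 (p t)) (hp'x : ∀ t > (0:ℝ), ContDiff ℝ 2 (p' t))
    (hpt : ∀ t > (0:ℝ), ∀ x, DifferentiableAt ℝ (fun s => p s x) t)
    (hp't : ∀ t > (0:ℝ), ∀ x, DifferentiableAt ℝ (fun s => p' s x) t)
    -- the two Fokker–Planck equations, pointwise
    (hFP : ∀ t > (0:ℝ), ∀ x, deriv (fun s => p s x) t =
      -(diverg (fun y => p t y • b y) x)
        + (1 / 2) * ∑ i, ∑ j, pd i (fun y => pd j (fun z => S z i j * p t z) y) x)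
    (hFP' : ∀ t > (0:ℝ), ∀ x, deriv (fun s => p' s x) t =
      -(diverg (fun y => p' t y • b' y) x)
        + (1 / 2) * ∑ i, ∑ j, pd i (fun y => pd j (fun z => S' z i j * p' t z) y) x)
    (t : ℝ) (ht : 0 < t)
    -- (i) differentiability of the relative entropy at `t`, with the stated derivative,
    -- and `∫ ∂_t p = 0`
    (hKderiv : HasDerivAt (fun s => KLdiv (p s) (p' s))
      ((∫ x, deriv (fun s => p s x) t * Real.log (p t x / p' t x))
        - ∫ x, (p t x / p' t x) * deriv (fun s => p' s x) t) t)
    (hmass : (∫ x, deriv (fun s => p s x) t) = 0)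
    -- (ii) finiteness of the two key integrals at time `t`
    (hint1 : Integrable (fun x =>
      p t x * ‖Matrix.toEuclideanLin ((hSpos x).posSemidef.sqrt)⁻¹
        (PhiVec b b' S S' (p' t) x)‖ ^ 2) volume)
    (hint2 : Integrable (fun x =>
      p' t x * (p' t x / p t x) * ‖Matrix.toEuclideanLin (hSpos x).posSemidef.sqrt
        (gradient (fun y => p t y / p' t y) x)‖ ^ 2) volume)
    -- (iii) vanishing boundary terms
    (hG1 : GoodField fun x => Real.log (p t x / p' t x) • Jvec b S (p t) x)
    (hG2 : GoodField fun x =>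
      p t x • Matrix.toEuclideanLin (S x) (gradient (fun y => Real.log (p t y / p' t y)) x))
    (hG3 : GoodField fun x => (p t x / p' t x) • Jvec b S (p' t) x)
    (hG4 : GoodField fun x =>
      p' t x • Matrix.toEuclideanLin (S x) (gradient (fun y => p t y / p' t y) x))
    (hG5 : GoodField fun x =>
      (p' t x * (p t x / p' t x)) • PhiVec b b' S S' (p' t) x) :
    deriv (fun s => KLdiv (p s) (p' s)) t ≤
      (1 / 2) * ∫ x, p t x * ‖Matrix.toEuclideanLin ((hSpos x).posSemidef.sqrt)⁻¹
        (PhiVec b b' S S' (p' t) x)‖ ^ 2 :=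
  relative_entropy_derivative_bound_general b b' hb hb' S S' hS hS' hSpos p p' hppos hp'pos hpx hp'x
    hFP hFP' t ht hKderiv hint1 hint2 hG1 hG3 hG5

end
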